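/- If all edit cost functions are constant (c_vd, c_ed, c_vs, c_es, c_vi, c_ei are constants), then minimizing the cost of an independent edit path P from G1 to G2 is equivalent to maximizing M(P) = |\u011c1|·(c_vd+c_vi) on nodes plus |\u00ca1|·(c_ed+c_ei) on edges minus V_f·c_vs minus E_f·c_es, where V_f and E_f are the numbers of nodes and edges substituted at nonzero cost; explicitly, \u03b3(P) = |V1|c_vd + |E1|c_ed + |V2|c_vi + |E2|c_ei − M(P). -/

import Mathlib

/-!
Removals lower `|V|·cvd + |E|·ced` by exactly their cost and insertions raise `|V|·cvi + |E|·cei`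
by exactly theirs. Substitutions leave `V` and `E` alone, and since independence lets each node
or edge be substituted at most once, a substitution path costs `∑ c(initial label, final label)`,
which for constant costs counts the elements whose label changes. Adding the three phases, the
common subgraph `H1` is counted once for deletion and once for insertion, which gives `M(P)`.
-/

/-- Elementary edit operations on labeled graphs. -/
inductive EditOp (L : Type) where
  | rmV (v : ℕ)
  | rmE (e : ℕ × ℕ)
  | insV (v : ℕ) (l : L)
  | insE (e : ℕ × ℕ) (l : L)
  | subV (v : ℕ) (l : L)
  | subE (e : ℕ × ℕ) (l : L)

/-- A labeled graph (not assumed simple a priori). -/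
structure EditGraph (L : Type) where
  V : Finset ℕ
  E : Finset (ℕ × ℕ)
  μ : ℕ → L
  ν : ℕ × ℕ → L

/-- A graph is simple: edges join existing vertices, at most one edge per
ordered pair (automatic from `Finset`), and no self-loops. -/
def EditGraph.IsSimple {L : Type} (G : EditGraph L) : Prop :=
  (∀ e ∈ G.E, e.1 ∈ G.V ∧ e.2 ∈ G.V) ∧ (∀ e ∈ G.E, e.1 ≠ e.2)

/-- The effect of an elementary edit operation on a graph. -/
def EditGraph.apply {L : Type} (G : EditGraph L) : EditOp L → EditGraph L
  | .rmV v => { G with V := G.V.erase v }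
  | .rmE e => { G with E := G.E.erase e }
  | .insV v l => { G with V := insert v G.V, μ := Function.update G.μ v l }
  | .insE e l => { G with E := insert e G.E, ν := Function.update G.ν e l }
  | .subV v l => { G with μ := Function.update G.μ v l }
  | .subE e l => { G with ν := Function.update G.ν e l }

/-- Edit-path legality constraints for an elementary operation: a node may be
removed only after all its incident edges have been removed; an edge may be
inserted only between two existing nodes, without creating a parallel edge or
a self-loop; removals and substitutions apply to existing elements; node
insertion requires a fresh node. -/
def EditGraph.Legal {L : Type} (G : EditGraph L) : EditOp L → Prop
  | .rmV v => v ∈ G.V ∧ ∀ e ∈ G.E, e.1 ≠ v ∧ e.2 ≠ v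
  | .rmE e => e ∈ G.E
  | .insV v _ => v ∉ G.V
  | .insE e _ => e.1 ∈ G.V ∧ e.2 ∈ G.V ∧ e ∉ G.E ∧ e.1 ≠ e.2
  | .subV v _ => v ∈ G.V
  | .subE e _ => e ∈ G.E

/-- `IsEditPath G P G'` : the sequence of elementary operations `P` is an edit
path of `G` (each operation is legal when performed) transforming `G` into `G'`. -/
inductive IsEditPath {L : Type} : EditGraph L → List (EditOp L) → EditGraph L → Prop
  | nil (G : EditGraph L) : IsEditPath G [] G
  | cons {G G'' : EditGraph L} {op : EditOp L} {P : List (EditOp L)} :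
      G.Legal op → IsEditPath (G.apply op) P G'' → IsEditPath G (op :: P) G''

/-- Classification of elementary operations. -/
def EditOp.isRemoval {L : Type} : EditOp L → Prop
  | .rmV _ => True | .rmE _ => True | _ => False

def EditOp.isSubstitution {L : Type} : EditOp L → Prop
  | .subV _ _ => True | .subE _ _ => True | _ => False

def EditOp.isInsertion {L : Type} : EditOp L → Prop
  | .insV _ _ => True | .insE _ _ => True | _ => False

/-- An independent edit path: no node or edge is both substituted and removed,
none is both substituted and inserted, no inserted element is later removed,
and every node or edge is substituted at most once. -/
def Indep {L : Type} (P : List (EditOp L)) : Prop :=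
  (∀ v l, EditOp.subV v l ∈ P → EditOp.rmV (L := L) v ∉ P) ∧
  (∀ e l, EditOp.subE e l ∈ P → EditOp.rmE (L := L) e ∉ P) ∧
  (∀ v l l', EditOp.subV v l ∈ P → EditOp.insV v l' ∉ P) ∧
  (∀ e l l', EditOp.subE e l ∈ P → EditOp.insE e l' ∉ P) ∧
  (∀ v l, ¬ List.Sublist [EditOp.insV v l, EditOp.rmV v] P) ∧
  (∀ e l, ¬ List.Sublist [EditOp.insE e l, EditOp.rmE e] P) ∧
  (∀ v, P.countP (fun op => match op with | .subV w _ => decide (w = v) | _ => false) ≤ 1) ∧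
  (∀ e, P.countP (fun op => match op with | .subE f _ => decide (f = e) | _ => false) ≤ 1)

/-- Cost of an elementary operation, performed on the current graph `G`
(substitution costs depend on the old and new labels). -/
def opCost {L : Type} (cvd : ℕ → ℝ) (ced : ℕ × ℕ → ℝ) (cvi : ℕ → L → ℝ)
    (cei : ℕ × ℕ → L → ℝ) (cvs : ℕ → L → L → ℝ) (ces : ℕ × ℕ → L → L → ℝ)
    (G : EditGraph L) : EditOp L → ℝ
  | .rmV v => cvd v
  | .rmE e => ced e
  | .insV v l => cvi v l
  | .insE e l => cei e l
  | .subV v l => cvs v (G.μ v) l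
  | .subE e l => ces e (G.ν e) l

/-- Cost of an edit path: the sum of the costs of its elementary operations. -/
def pathCost {L : Type} (cvd : ℕ → ℝ) (ced : ℕ × ℕ → ℝ) (cvi : ℕ → L → ℝ)
    (cei : ℕ × ℕ → L → ℝ) (cvs : ℕ → L → L → ℝ) (ces : ℕ × ℕ → L → L → ℝ)
    (G : EditGraph L) : List (EditOp L) → ℝ
  | [] => 0
  | op :: P => opCost cvd ced cvi cei cvs ces G op
      + pathCost cvd ced cvi cei cvs ces (G.apply op) P

def EditOp.target {L : Type} : EditOp L → ℕ ⊕ (ℕ × ℕ)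
  | .rmV v | .insV v _ | .subV v _ => .inl v
  | .rmE e | .insE e _ | .subE e _ => .inr e

theorem Finset.sum_eq_add_sum_update_of_mem {α β : Type*} [DecidableEq α] {s : Finset α} {v : α}
    (hv : v ∈ s) (c : α → β → β → ℝ) (f g : α → β) (hc : c v (g v) (g v) = 0) :
    ∑ w ∈ s, c w (f w) (g w)
      = c v (f v) (g v) + ∑ w ∈ s, c w (Function.update f v (g v) w) (g w) := by
  rw [← Finset.add_sum_erase s _ hv, ← Finset.add_sum_erase s _ hv, Function.update_self, hc,
    zero_add]
  congr 1
  refine Finset.sum_congr rfl fun w hw => ?_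
  rw [Function.update_of_ne (Finset.ne_of_mem_erase hw)]

namespace IsEditPath

variable {L : Type} {G G' G'' : EditGraph L} {P Q : List (EditOp L)}

theorem append (hP : IsEditPath G P G') (hQ : IsEditPath G' Q G'') :
    IsEditPath G (P ++ Q) G'' := by
  induction hP with
  | nil => exact hQ
  | cons hl _ ih => exact .cons hl (ih hQ)

theorem pathCost_append (cvd : ℕ → ℝ) (ced : ℕ × ℕ → ℝ) (cvi : ℕ → L → ℝ)
    (cei : ℕ × ℕ → L → ℝ) (cvs : ℕ → L → L → ℝ) (ces : ℕ × ℕ → L → L → ℝ)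
    (h : IsEditPath G P G') (Q : List (EditOp L)) :
    pathCost cvd ced cvi cei cvs ces G (P ++ Q)
      = pathCost cvd ced cvi cei cvs ces G P + pathCost cvd ced cvi cei cvs ces G' Q := by
  induction h with
  | nil => simp [pathCost]
  | cons _ _ ih => simp [pathCost, ih, add_assoc]

theorem μ_eq_of_forall_target_ne {v : ℕ} (h : IsEditPath G P G')
    (hv : ∀ op ∈ P, op.target ≠ .inl v) : G'.μ v = G.μ v := by
  induction h with
  | nil => rfl
  | @cons G _ op _ _ _ ih =>
    rw [ih fun o ho => hv o (List.mem_cons_of_mem _ ho)]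
    have := hv op List.mem_cons_self
    cases op <;> simp_all [EditGraph.apply, EditOp.target, Function.update_of_ne, Ne.symm]

theorem ν_eq_of_forall_target_ne {e : ℕ × ℕ} (h : IsEditPath G P G')
    (he : ∀ op ∈ P, op.target ≠ .inr e) : G'.ν e = G.ν e := by
  induction h with
  | nil => rfl
  | @cons G _ op _ _ _ ih =>
    rw [ih fun o ho => he o (List.mem_cons_of_mem _ ho)]
    have := he op List.mem_cons_self
    cases op <;> simp_all [EditGraph.apply, EditOp.target, Function.update_of_ne, Ne.symm]

theorem V_eq_and_E_eq_of_isSubstitution (h : IsEditPath G P G')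
    (hP : ∀ op ∈ P, op.isSubstitution) : G'.V = G.V ∧ G'.E = G.E := by
  induction h with
  | nil => exact ⟨rfl, rfl⟩
  | @cons G _ op _ _ _ ih =>
    have := hP op List.mem_cons_self
    obtain ⟨hV, hE⟩ := ih fun o ho => hP o (List.mem_cons_of_mem _ ho)
    cases op <;> simp_all [EditGraph.apply, EditOp.isSubstitution]

end IsEditPath

section PhaseCosts

variable {L : Type} {G G' : EditGraph L} {P : List (EditOp L)}

theorem pathCost_add_of_isRemoval (cvd ced : ℝ) (cvi : ℕ → L → ℝ) (cei : ℕ × ℕ → L → ℝ)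
    (cvs : ℕ → L → L → ℝ) (ces : ℕ × ℕ → L → L → ℝ)
    (h : IsEditPath G P G') (hP : ∀ op ∈ P, op.isRemoval) :
    pathCost (fun _ => cvd) (fun _ => ced) cvi cei cvs ces G P
        + G'.V.card * cvd + G'.E.card * ced
      = G.V.card * cvd + G.E.card * ced := by
  induction h with
  | nil => simp [pathCost]
  | @cons G _ op _ hl _ ih =>
    have hop := hP op List.mem_cons_self
    have ih := ih fun o ho => hP o (List.mem_cons_of_mem _ ho)
    cases op with
    | rmV v =>
      have hcard : ((G.V.erase v).card : ℝ) + 1 = G.V.card := by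
        exact_mod_cast Finset.card_erase_add_one hl.1
      simp only [pathCost, opCost, EditGraph.apply] at ih ⊢
      linear_combination ih + cvd * hcard
    | rmE e =>
      have hcard : ((G.E.erase e).card : ℝ) + 1 = G.E.card := by
        exact_mod_cast Finset.card_erase_add_one hl
      simp only [pathCost, opCost, EditGraph.apply] at ih ⊢
      linear_combination ih + ced * hcard
    | _ => simp [EditOp.isRemoval] at hop

theorem pathCost_add_of_isInsertion (cvi cei : ℝ) (cvd : ℕ → ℝ) (ced : ℕ × ℕ → ℝ)
    (cvs : ℕ → L → L → ℝ) (ces : ℕ × ℕ → L → L → ℝ)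
    (h : IsEditPath G P G') (hP : ∀ op ∈ P, op.isInsertion) :
    pathCost cvd ced (fun _ _ => cvi) (fun _ _ => cei) cvs ces G P
        + G.V.card * cvi + G.E.card * cei
      = G'.V.card * cvi + G'.E.card * cei := by
  induction h with
  | nil => simp [pathCost]
  | @cons G _ op _ hl _ ih =>
    have hop := hP op List.mem_cons_self
    have ih := ih fun o ho => hP o (List.mem_cons_of_mem _ ho)
    cases op with
    | insV v l =>
      have hcard : ((insert v G.V).card : ℝ) = G.V.card + 1 := by
        exact_mod_cast Finset.card_insert_of_notMem hl
      simp only [pathCost, opCost, EditGraph.apply] at ih ⊢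
      linear_combination ih - cvi * hcard
    | insE e l =>
      have hcard : ((insert e G.E).card : ℝ) = G.E.card + 1 := by
        exact_mod_cast Finset.card_insert_of_notMem hl.2.2.1
      simp only [pathCost, opCost, EditGraph.apply] at ih ⊢
      linear_combination ih - cei * hcard
    | _ => simp [EditOp.isInsertion] at hop

theorem pathCost_of_isSubstitution [DecidableEq L] (cvd : ℕ → ℝ) (ced : ℕ × ℕ → ℝ)
    (cvi : ℕ → L → ℝ) (cei : ℕ × ℕ → L → ℝ) {cvs : ℕ → L → L → ℝ} {ces : ℕ × ℕ → L → L → ℝ}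
    (hcvs : ∀ v l, cvs v l l = 0) (hces : ∀ e l, ces e l l = 0)
    (h : IsEditPath G P G') (hP : ∀ op ∈ P, op.isSubstitution)
    (hnd : (P.map EditOp.target).Nodup) :
    pathCost cvd ced cvi cei cvs ces G P
      = ∑ v ∈ G.V, cvs v (G.μ v) (G'.μ v) + ∑ e ∈ G.E, ces e (G.ν e) (G'.ν e) := by
  induction h with
  | nil => simp [pathCost, hcvs, hces]
  | @cons G G' op P hl hp ih =>
    have hop := hP op List.mem_cons_self
    rw [List.map_cons, List.nodup_cons] at hnd
    obtain ⟨hfresh, hnd⟩ := hnd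
    have hlater : ∀ o ∈ P, o.target ≠ op.target := fun o ho h =>
      hfresh (h ▸ List.mem_map_of_mem ho)
    rw [pathCost, ih (fun o ho => hP o (List.mem_cons_of_mem _ ho)) hnd]
    cases op with
    | subV v l =>
      have hv : G'.μ v = l := by
        simpa [EditGraph.apply] using hp.μ_eq_of_forall_target_ne hlater
      subst hv
      rw [Finset.sum_eq_add_sum_update_of_mem hl _ G.μ G'.μ (hcvs _ _)]
      simp only [opCost, EditGraph.apply]
      ring
    | subE e l =>
      have he : G'.ν e = l := by
        simpa [EditGraph.apply] using hp.ν_eq_of_forall_target_ne hlater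
      subst he
      rw [Finset.sum_eq_add_sum_update_of_mem hl _ G.ν G'.ν (hces _ _)]
      simp only [opCost, EditGraph.apply]
      ring
    | _ => simp [EditOp.isSubstitution] at hop

theorem pathCost_of_isSubstitution_const [DecidableEq L] (cvd : ℕ → ℝ) (ced : ℕ × ℕ → ℝ)
    (cvi : ℕ → L → ℝ) (cei : ℕ × ℕ → L → ℝ) (cvs ces : ℝ)
    (h : IsEditPath G P G') (hP : ∀ op ∈ P, op.isSubstitution)
    (hnd : (P.map EditOp.target).Nodup) :
    pathCost cvd ced cvi cei (fun _ l l' => if l = l' then 0 else cvs)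
        (fun _ l l' => if l = l' then 0 else ces) G P
      = (G.V.filter (fun v => G.μ v ≠ G'.μ v)).card * cvs
        + (G.E.filter (fun e => G.ν e ≠ G'.ν e)).card * ces := by
  rw [pathCost_of_isSubstitution cvd ced cvi cei (fun _ _ => if_pos rfl) (fun _ _ => if_pos rfl)
    h hP hnd]
  simp only [Finset.sum_ite, Finset.sum_const_zero, zero_add, Finset.sum_const, nsmul_eq_mul]

end PhaseCosts

theorem Indep.nodup_map_target_of_sublist {L : Type} {P Q : List (EditOp L)} (hQ : Indep Q)
    (hPQ : P.Sublist Q) (hP : ∀ op ∈ P, op.isSubstitution) : (P.map EditOp.target).Nodup := by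
  obtain ⟨-, -, -, -, -, -, hV, hE⟩ := hQ
  -- the default `BEq` on a sum type has no `LawfulBEq` instance
  rw [@List.nodup_iff_count_le_one _ instBEqOfDecidableEq]
  rintro (v | e)
  on_goal 1 => refine le_trans (le_of_eq ?_) (hPQ.countP_le.trans (hV v))
  on_goal 2 => refine le_trans (le_of_eq ?_) (hPQ.countP_le.trans (hE e))
  all_goals
    simp only [List.count_eq_countP, List.countP_map]
    refine List.countP_congr fun op hop => ?_
    have := hP op hop
    cases op <;> simp_all [EditOp.target, EditOp.isSubstitution]

theorem indep_editPath_cost_const_general {L : Type} [DecidableEq L] (G1 G2 H1 H2 : EditGraph L)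
    (cvd ced cvi cei cvs ces : ℝ)
    (R S I : List (EditOp L))
    (hR : ∀ op ∈ R, op.isRemoval) (hS : ∀ op ∈ S, op.isSubstitution)
    (hI : ∀ op ∈ I, op.isInsertion)
    (hInd : Indep (R ++ S ++ I))
    (h1 : IsEditPath G1 R H1) (h2 : IsEditPath H1 S H2) (h3 : IsEditPath H2 I G2) :
    pathCost (fun _ => cvd) (fun _ => ced) (fun _ _ => cvi) (fun _ _ => cei)
        (fun _ l l' => if l = l' then 0 else cvs)
        (fun _ l l' => if l = l' then 0 else ces) G1 (R ++ S ++ I)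
      = (G1.V.card : ℝ) * cvd + (G1.E.card : ℝ) * ced
        + (G2.V.card : ℝ) * cvi + (G2.E.card : ℝ) * cei
        - ((H1.V.card : ℝ) * (cvd + cvi) + (H1.E.card : ℝ) * (ced + cei)
            - ((H1.V.filter (fun v => H1.μ v ≠ H2.μ v)).card : ℝ) * cvs
            - ((H1.E.filter (fun e => H1.ν e ≠ H2.ν e)).card : ℝ) * ces) := by
  have hnd := hInd.nodup_map_target_of_sublist (List.infix_append R S I).sublist hS
  rw [(h1.append h2).pathCost_append, h1.pathCost_append]
  have hRcost := pathCost_add_of_isRemoval cvd ced (fun _ _ => cvi) (fun _ _ => cei)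
    (fun _ l l' => if l = l' then 0 else cvs) (fun _ l l' => if l = l' then 0 else ces) h1 hR
  have hScost := pathCost_of_isSubstitution_const (fun _ => cvd) (fun _ => ced)
    (fun _ _ => cvi) (fun _ _ => cei) cvs ces h2 hS hnd
  have hIcost := pathCost_add_of_isInsertion cvi cei (fun _ => cvd) (fun _ => ced)
    (fun _ l l' => if l = l' then 0 else cvs) (fun _ l l' => if l = l' then 0 else ces) h3 hI
  obtain ⟨hV, hE⟩ := h2.V_eq_and_E_eq_of_isSubstitution hS
  rw [hV, hE] at hIcost
  linear_combination hRcost + hScost + hIcost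

/-- with constant edit cost functions
(`cvd, ced, cvs, ces, cvi, cei` constants, identity substitutions free),
the cost of an independent edit path `P = (R,S,I)` from `G1` to `G2` is
`γ(P) = |V1|·cvd + |E1|·ced + |V2|·cvi + |E2|·cei − M(P)` where
`M(P) = |V̂1|(cvd+cvi) + |Ê1|(ced+cei) − V_f·cvs − E_f·ces`, with `V_f`
(resp. `E_f`) the number of nodes (resp. edges) substituted at nonzero cost.
Hence minimizing `γ(P)` is equivalent to maximizing `M(P)`. -/
theorem indep_editPath_cost_const {L : Type} [DecidableEq L] (G1 G2 H1 H2 : EditGraph L)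
    (cvd ced cvi cei cvs ces : ℝ)
    (R S I : List (EditOp L)) (hG1 : G1.IsSimple)
    (hR : ∀ op ∈ R, op.isRemoval) (hS : ∀ op ∈ S, op.isSubstitution)
    (hI : ∀ op ∈ I, op.isInsertion)
    (hInd : Indep (R ++ S ++ I))
    (h1 : IsEditPath G1 R H1) (h2 : IsEditPath H1 S H2) (h3 : IsEditPath H2 I G2) :
    pathCost (fun _ => cvd) (fun _ => ced) (fun _ _ => cvi) (fun _ _ => cei)
        (fun _ l l' => if l = l' then 0 else cvs)
        (fun _ l l' => if l = l' then 0 else ces) G1 (R ++ S ++ I)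
      = (G1.V.card : ℝ) * cvd + (G1.E.card : ℝ) * ced
        + (G2.V.card : ℝ) * cvi + (G2.E.card : ℝ) * cei
        - ((H1.V.card : ℝ) * (cvd + cvi) + (H1.E.card : ℝ) * (ced + cei)
            - ((H1.V.filter (fun v => H1.μ v ≠ H2.μ v)).card : ℝ) * cvs
            - ((H1.E.filter (fun e => H1.ν e ≠ H2.ν e)).card : ℝ) * ces) :=
  indep_editPath_cost_const_general G1 G2 H1 H2 cvd ced cvi cei cvs ces R S I hR hS hI hInd h1 h2 h3
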